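/- The limit as n → ∞ of (Σ_{k≥0, n−5−2k≥0} [F_{2(n−5−2k)+1} + (1/2)F_{2(n−5−2k)}]) / F_{2n+2} exists and equals (φ^{−11} + (1/2)φ^{−12})·(1 − φ^{−4})^{−1} = (65 − 29√5)/20, where Fₖ are the Fibonacci numbers and φ = (1+√5)/2. -/

import Mathlib

open Real Filter

noncomputable def goldenφ : ℝ := (1 + Real.sqrt 5) / 2

/-!
The numerator telescopes: with `m = n - 5`, summing
`F (j + 8) + F (j + 10) - F (j + 4) - F (j + 6) = 10 F (j + 5) + 5 F (j + 4)`
over `j = 2i - 4`, `i = m, m - 2, …` gives `10 · numerator = F (2m + 4) + F (2m + 6) - ε`,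
where `ε ∈ {1, 4}` depends on the parity of `m`. Binet's formula gives
`F (N + c) / φ ^ N → φ ^ c / √5`, so the ratio tends to `(φ ^ 4 + φ ^ 6) / (10 φ ^ 12)`,
and arithmetic in `ℚ(φ)` identifies this with both stated forms.
-/

open Topology Finset goldenRatio
open Nat (fib)

lemma sum_range_sub_two_mul_add_two {M : Type*} [AddCommMonoid M] (g : ℕ → M) (m : ℕ) :
    ∑ k ∈ range ((m + 2) / 2 + 1), g (m + 2 - 2 * k) =
      g (m + 2) + ∑ k ∈ range (m / 2 + 1), g (m - 2 * k) := by
  rw [show (m + 2) / 2 + 1 = m / 2 + 1 + 1 by omega, sum_range_succ', add_comm]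
  congr 1
  refine sum_congr rfl fun k _ => congrArg g ?_
  omega

lemma fib_add_eight_add_fib_add_ten (n : ℕ) :
    fib (n + 8) + fib (n + 10) =
      fib (n + 4) + fib (n + 6) + 10 * fib (n + 5) + 5 * fib (n + 4) := by
  simp only [Nat.fib_add_two]
  ring

noncomputable def ringModeTerm (i : ℕ) : ℝ := fib (2 * i + 1) + 1 / 2 * fib (2 * i)

noncomputable def ringModeSum (m : ℕ) : ℝ := ∑ k ∈ range (m / 2 + 1), ringModeTerm (m - 2 * k)

lemma ringModeSum_add_two (m : ℕ) :
    ringModeSum (m + 2) = ringModeTerm (m + 2) + ringModeSum m :=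
  sum_range_sub_two_mul_add_two ringModeTerm m

lemma ten_mul_ringModeSum_add_parity (m : ℕ) :
    10 * ringModeSum m + (if Even m then 1 else 4) = fib (2 * m + 4) + fib (2 * m + 6) := by
  induction m using Nat.twoStepInduction with
  | zero => norm_num [ringModeSum, ringModeTerm, Nat.fib_add_two]
  | one => norm_num [ringModeSum, ringModeTerm, sum_range_succ, Nat.fib_add_two]
  | more m ih _ =>
    have hfib : (fib (2 * m + 8) + fib (2 * m + 10) : ℝ) =
        fib (2 * m + 4) + fib (2 * m + 6) + 10 * fib (2 * m + 5) + 5 * fib (2 * m + 4) := by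
      exact_mod_cast fib_add_eight_add_fib_add_ten (2 * m)
    rw [ringModeSum_add_two, ringModeTerm, show 2 * (m + 2) = 2 * m + 4 by ring]
    simp only [Nat.even_add, even_two, iff_true, add_assoc, Nat.reduceAdd]
    rw [hfib]
    linarith

lemma tendsto_fib_div_goldenRatio_pow :
    Tendsto (fun n ↦ (fib n : ℝ) / φ ^ n) atTop (𝓝 (1 / √5)) := by
  have hratio : |ψ / φ| < 1 := by
    rw [abs_div, abs_of_neg goldenConj_neg, abs_of_pos goldenRatio_pos, div_lt_one goldenRatio_pos]
    linarith [neg_one_lt_goldenConj, one_lt_goldenRatio]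
  have hlim := ((tendsto_pow_atTop_nhds_zero_of_abs_lt_one hratio).const_sub 1).div_const √5
  rw [sub_zero] at hlim
  refine hlim.congr fun n ↦ ?_
  rw [coe_fib_eq, div_pow]
  field_simp

lemma tendsto_fib_add_div_goldenRatio_pow (c : ℕ) :
    Tendsto (fun n ↦ (fib (n + c) : ℝ) / φ ^ n) atTop (𝓝 (φ ^ c / √5)) := by
  have hlim := (tendsto_fib_div_goldenRatio_pow.comp (tendsto_add_atTop_nat c)).const_mul (φ ^ c)
  rw [mul_one_div] at hlim
  refine hlim.congr fun n ↦ ?_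
  simp only [Function.comp_apply, pow_add]
  field_simp

lemma tendsto_ringModeSum_div_fib :
    Tendsto (fun m ↦ ringModeSum m / fib (2 * m + 12)) atTop
      (𝓝 ((φ ^ 4 + φ ^ 6) / (10 * φ ^ 12))) := by
  have htwo : Tendsto (fun m : ℕ ↦ 2 * m) atTop atTop := tendsto_id.const_mul_atTop' two_pos
  have hfib (c : ℕ) : Tendsto (fun m ↦ (fib (2 * m + c) : ℝ) / φ ^ (2 * m)) atTop
      (𝓝 (φ ^ c / √5)) := (tendsto_fib_add_div_goldenRatio_pow c).comp htwo
  have hpow : Tendsto (fun m ↦ φ ^ (2 * m)) atTop atTop :=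
    (tendsto_pow_atTop_atTop_of_one_lt one_lt_goldenRatio).comp htwo
  have hparity : Tendsto (fun m ↦ (if Even m then (1 : ℝ) else 4) / φ ^ (2 * m)) atTop (𝓝 0) := by
    refine squeeze_zero (fun m ↦ by positivity) (fun m ↦ ?_)
      (tendsto_const_nhds (x := (4 : ℝ)).div_atTop hpow)
    gcongr
    split_ifs <;> norm_num
  have hnum := (((hfib 4).add (hfib 6)).sub hparity).div_const 10
  have hlim := hnum.div (hfib 12) (by positivity)
  convert hlim using 2 with m
  · have hsum := ten_mul_ringModeSum_add_parity m
    simp only [Pi.div_apply]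
    field_simp
    linarith
  · rw [sub_zero]
    field_simp

lemma goldenRatio_ringMode_const_eq :
    ((φ ^ 11)⁻¹ + 1 / 2 * (φ ^ 12)⁻¹) * (1 - (φ ^ 4)⁻¹)⁻¹ = (φ ^ 4 + φ ^ 6) / (10 * φ ^ 12) := by
  have hsq := goldenRatio_sq
  have h4 : φ ^ 4 - 1 ≠ 0 := by nlinarith [one_lt_goldenRatio]
  field_simp
  grind

lemma goldenRatio_pow_four_add_pow_six_div :
    (φ ^ 4 + φ ^ 6) / (10 * φ ^ 12) = (65 - 29 * √5) / 20 := by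
  rw [← goldenRatio_sub_goldenConj, ← one_sub_goldenRatio]
  have hsq := goldenRatio_sq
  have hpos := goldenRatio_pos
  field_simp
  grind

theorem robinson_ringmode_frequency_limit :
    Tendsto
      (fun n : ℕ =>
        (∑ k ∈ Finset.range ((n - 5) / 2 + 1),
            ((Nat.fib (2 * (n - 5 - 2 * k) + 1) : ℝ)
              + (1 / 2) * (Nat.fib (2 * (n - 5 - 2 * k)) : ℝ)))
          / (Nat.fib (2 * n + 2) : ℝ))
      atTop
      (nhds (((goldenφ ^ 11)⁻¹ + (1 / 2) * (goldenφ ^ 12)⁻¹)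
        * (1 - (goldenφ ^ 4)⁻¹)⁻¹)) ∧
    ((goldenφ ^ 11)⁻¹ + (1 / 2) * (goldenφ ^ 12)⁻¹) * (1 - (goldenφ ^ 4)⁻¹)⁻¹ =
      (65 - 29 * Real.sqrt 5) / 20 := by
  rw [show goldenφ = φ from rfl, goldenRatio_ringMode_const_eq]
  refine ⟨?_, goldenRatio_pow_four_add_pow_six_div⟩
  rw [← tendsto_add_atTop_iff_nat 5]
  refine tendsto_ringModeSum_div_fib.congr fun m ↦ ?_
  rw [Nat.add_sub_cancel, show 2 * (m + 5) + 2 = 2 * m + 12 by ring]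
  rfl
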